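/- arXiv:math/0703438 — 5 statements merged into one kernel-verified Lean document; each statement's English description precedes it below -/
import Mathlib

section
/- Let {h_j}_{j∈J} be a Riesz partition of unity on ℝ^d with bounds p and P. For each j define W_j to be the L²-closure of {\bar{h_j} f : f ∈ L²(ℝ^d)}. Suppose for each j, {g_{j,k}}_{k∈K} is a frame for W_j with bounds m_j and M_j, and m := inf_j m_j > 0, M := sup_j M_j < ∞. Then {h_j g_{j,k} : j ∈ J, k ∈ K} is a frame for L²(ℝ^d) with frame bounds pm and PM. -/
open MeasureTheory Filter Topology
noncomputable section
abbrev Rd (d : ℕ) := Fin d → ℝ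
abbrev L2 (d : ℕ) := Lp ℂ 2 (volume : Measure (Rd d))
/-- `K_Q`: elements of `L²(ℝ^d)` supported (a.e.) in the closure of `Q`. -/
def Ksp {d : ℕ} (Q : Set (Rd d)) : Set (L2 d) :=
  {f | ∀ᵐ x ∂(volume : Measure (Rd d)), x ∉ closure Q → f x = 0}
/-- `g` is a frame for the subset `F` of `L²(ℝ^d)` with bounds `m`, `M`. -/
def IsFrameWith {d : ℕ} {J : Type*} (g : J → L2 d) (F : Set (L2 d)) (m M : ℝ) : Prop :=
  (∀ j, g j ∈ F) ∧
  ∀ f ∈ F, m * ‖f‖ ^ 2 ≤ ∑' j, ‖(inner ℂ f (g j) : ℂ)‖ ^ 2 ∧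
    (∑' j, ‖(inner ℂ f (g j) : ℂ)‖ ^ 2) ≤ M * ‖f‖ ^ 2
/-- `W_j`: the L²-closure of `{conj(h_j) f : f ∈ L²}`. -/
def Wspace {d : ℕ} (hj : Rd d → ℂ) : Set (L2 d) :=
  closure {F : L2 d | ∃ f : L2 d,
    ∀ᵐ x ∂(volume : Measure (Rd d)), F x = (starRingEnd ℂ) (hj x) * f x}

/-! For `f ∈ L²` put `F_j = conj(h_j) f ∈ W_j`. Then `⟪f, h_j g_{j,k}⟫ = ⟪F_j, g_{j,k}⟫`, so the
frame property of `{g_{j,k}}_k` puts `∑_k |⟪f, h_j g_{j,k}⟫|²` between `m ‖F_j‖²` and `M ‖F_j‖²`,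
while `∑_j ‖F_j‖² = ∫ (∑_j |h_j|²) |f|²` lies between `p ‖f‖²` and `P ‖f‖²`. The estimates are
carried out in `ℝ≥0∞`, where every series converges and double series can be regrouped. -/

open scoped ENNReal ComplexConjugate
open Set

-- `0 < c` excludes the junk value `∑' i, a i = 0` of a non-summable series.
lemma tsum_ofReal_mem_Icc_iff {ι : Type*} {a : ι → ℝ} (ha : ∀ i, 0 ≤ a i) {c C : ℝ}
    (hc : 0 < c) :
    ∑' i, ENNReal.ofReal (a i) ∈ Icc (ENNReal.ofReal c) (ENNReal.ofReal C) ↔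
      ∑' i, a i ∈ Icc c C := by
  by_cases hs : Summable a
  · rw [← ENNReal.ofReal_tsum_of_nonneg ha hs, mem_Icc, mem_Icc, ENNReal.ofReal_le_ofReal_iff',
      ENNReal.ofReal_le_ofReal_iff']
    constructor
    · rintro ⟨hlow, hup⟩
      have hc_le := hlow.resolve_right hc.not_ge
      exact ⟨hc_le, hup.resolve_right (by linarith)⟩
    · rintro ⟨hlow, hup⟩
      exact ⟨.inl hlow, .inl hup⟩
  · have htop : ∑' i, ENNReal.ofReal (a i) = ⊤ := by
      by_contra h
      exact hs (by simpa [ha] using ENNReal.summable_toReal h)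
    simp [htop, tsum_eq_zero_of_not_summable hs, hc.not_ge]

lemma ENNReal.tsum_tsum_mem_Icc_mul {ι κ : Type*} {a : ι → κ → ℝ≥0∞} {b : ι → ℝ≥0∞}
    {c C c' C' x : ℝ≥0∞} (ha : ∀ i, ∑' k, a i k ∈ Icc (c * b i) (C * b i))
    (hb : ∑' i, b i ∈ Icc (c' * x) (C' * x)) :
    ∑' i, ∑' k, a i k ∈ Icc (c' * c * x) (C' * C * x) := by
  constructor
  · calc c' * c * x = c * (c' * x) := by ring
      _ ≤ c * ∑' i, b i := mul_le_mul_right hb.1 _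
      _ = ∑' i, c * b i := ENNReal.tsum_mul_left.symm
      _ ≤ _ := ENNReal.tsum_le_tsum fun i => (ha i).1
  · calc ∑' i, ∑' k, a i k ≤ ∑' i, C * b i := ENNReal.tsum_le_tsum fun i => (ha i).2
      _ = C * ∑' i, b i := ENNReal.tsum_mul_left
      _ ≤ C * (C' * x) := mul_le_mul_right hb.2 _
      _ = C' * C * x := by ring

section

variable {α : Type*} [MeasurableSpace α] {μ : Measure α}

lemma MeasureTheory.Lp.enorm_sq_eq_lintegral {E : Type*} [NormedAddCommGroup E]
    (f : Lp E 2 μ) : ‖f‖ₑ ^ 2 = ∫⁻ x, ‖f x‖ₑ ^ 2 ∂μ := by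
  simpa [Lp.enorm_def] using
    eLpNorm_nnreal_pow_eq_lintegral (f := f) (μ := μ) (p := 2) two_ne_zero

lemma memLp_top_of_ae_enorm_sq_le {E : Type*} [NormedAddCommGroup E] {h : α → E}
    (hh : AEStronglyMeasurable h μ) {C : ℝ} (hC : 0 ≤ C)
    (hle : ∀ᵐ x ∂μ, ‖h x‖ₑ ^ 2 ≤ ENNReal.ofReal C) : MemLp h ⊤ μ := by
  refine memLp_top_of_bound hh √C (hle.mono fun x hx => Real.le_sqrt_of_sq_le ?_)
  rwa [← ofReal_norm, ← ENNReal.ofReal_pow (norm_nonneg _), ENNReal.ofReal_le_ofReal_iff hC] at hx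

lemma exists_Lp_ae_eq_conj_mul {h : α → ℂ} (hh : MemLp h ⊤ μ) (f : Lp ℂ 2 μ) :
    ∃ F : Lp ℂ 2 μ, F =ᵐ[μ] fun x => conj (h x) * f x :=
  ⟨_, ((Lp.memLp f).mul' hh.star).coeFn_toLp⟩

lemma inner_eq_inner_of_ae_eq_mul {h : α → ℂ} {f g F G : Lp ℂ 2 μ}
    (hF : F =ᵐ[μ] fun x => conj (h x) * f x) (hG : G =ᵐ[μ] fun x => h x * g x) :
    inner ℂ f G = inner ℂ F g := by
  rw [L2.inner_def, L2.inner_def]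
  refine integral_congr_ae ?_
  filter_upwards [hF, hG] with x hFx hGx
  simp only [RCLike.inner_apply, hFx, hGx, map_mul, Complex.conj_conj]
  ring

lemma tsum_enorm_sq_mem_Icc_of_ae_eq_conj_mul {ι : Type*} [Countable ι] {h : ι → α → ℂ}
    {f : Lp ℂ 2 μ} {F : ι → Lp ℂ 2 μ} (hF : ∀ i, F i =ᵐ[μ] fun x => conj (h i x) * f x)
    {a b : ℝ≥0∞} (hab : ∀ᵐ x ∂μ, ∑' i, ‖h i x‖ₑ ^ 2 ∈ Icc a b) :
    ∑' i, ‖F i‖ₑ ^ 2 ∈ Icc (a * ‖f‖ₑ ^ 2) (b * ‖f‖ₑ ^ 2) := by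
  have hpt : ∀ᵐ x ∂μ, ∑' i, ‖F i x‖ₑ ^ 2 = (∑' i, ‖h i x‖ₑ ^ 2) * ‖f x‖ₑ ^ 2 := by
    filter_upwards [ae_all_iff.mpr hF] with x hx
    simp [hx, mul_pow, ENNReal.tsum_mul_right]
  have hsum : ∑' i, ‖F i‖ₑ ^ 2 = ∫⁻ x, (∑' i, ‖h i x‖ₑ ^ 2) * ‖f x‖ₑ ^ 2 ∂μ := by
    simp_rw [Lp.enorm_sq_eq_lintegral]
    rw [← lintegral_tsum fun i => (Lp.aestronglyMeasurable (F i)).enorm.pow_const 2]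
    exact lintegral_congr_ae hpt
  have hf := (Lp.aestronglyMeasurable f).enorm.pow_const 2
  rw [hsum, Lp.enorm_sq_eq_lintegral, ← lintegral_const_mul'' _ hf, ← lintegral_const_mul'' _ hf]
  exact ⟨lintegral_mono_ae (hab.mono fun x hx => mul_le_mul_left hx.1 _),
    lintegral_mono_ae (hab.mono fun x hx => mul_le_mul_left hx.2 _)⟩

end

lemma IsFrameWith.mono_bounds {d : ℕ} {ι : Type*} {g : ι → L2 d} {F : Set (L2 d)}
    {m M m' M' : ℝ} (hg : IsFrameWith g F m M) (hm : m' ≤ m) (hM : M ≤ M') :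
    IsFrameWith g F m' M' := by
  refine ⟨hg.1, fun f hf => ⟨le_trans ?_ (hg.2 f hf).1, (hg.2 f hf).2.trans ?_⟩⟩ <;> gcongr

lemma isFrameWith_iff_enorm {d : ℕ} {ι : Type*} {g : ι → L2 d} {F : Set (L2 d)} {m M : ℝ}
    (hm : 0 < m) :
    IsFrameWith g F m M ↔ (∀ i, g i ∈ F) ∧ ∀ f ∈ F, ∑' i, ‖inner ℂ f (g i)‖ₑ ^ 2 ∈
      Icc (ENNReal.ofReal m * ‖f‖ₑ ^ 2) (ENNReal.ofReal M * ‖f‖ₑ ^ 2) := by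
  refine and_congr_right fun _ => forall₂_congr fun f _ => ?_
  rcases eq_or_ne f 0 with rfl | hf
  · simp
  have hofReal (r : ℝ) (z : L2 d) :
      ENNReal.ofReal (r * ‖z‖ ^ 2) = ENNReal.ofReal r * ‖z‖ₑ ^ 2 := by
    rw [ENNReal.ofReal_mul' (by positivity), ENNReal.ofReal_pow (norm_nonneg _), ofReal_norm]
  have := tsum_ofReal_mem_Icc_iff (a := fun i => ‖inner ℂ f (g i)‖ ^ 2) (fun _ => by positivity)
    (c := m * ‖f‖ ^ 2) (C := M * ‖f‖ ^ 2) (by positivity)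
  simpa [hofReal, ENNReal.ofReal_pow, ofReal_norm] using this.symm

theorem stmt4_general {d : ℕ} {J K : Type*} [Countable J]
    (h : J → Rd d → ℂ) (hmeas : ∀ j, Measurable (h j)) (p P : ℝ) (hp : 0 < p)
    (hRPU : ∀ᵐ x ∂(volume : Measure (Rd d)),
      p ≤ ∑' j, ‖h j x‖ ^ 2 ∧ (∑' j, ‖h j x‖ ^ 2) ≤ P)
    (g : J → K → L2 d) (mj Mj : J → ℝ) (m M : ℝ) (hm : 0 < m)
    (hmj : ∀ j, m ≤ mj j) (hMj : ∀ j, Mj j ≤ M)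
    (hframe : ∀ j, IsFrameWith (g j) (Wspace (h j)) (mj j) (Mj j))
    (hg : J × K → L2 d)
    (hhg : ∀ j k, ∀ᵐ x ∂(volume : Measure (Rd d)), hg (j, k) x = h j x * g j k x) :
    IsFrameWith hg (Set.univ : Set (L2 d)) (p * m) (P * M) := by
  have hP : 0 ≤ P := by
    obtain ⟨x, hx⟩ := hRPU.exists
    exact hp.le.trans (hx.1.trans hx.2)
  have hweights : ∀ᵐ x ∂(volume : Measure (Rd d)),
      ∑' j, ‖h j x‖ₑ ^ 2 ∈ Icc (ENNReal.ofReal p) (ENNReal.ofReal P) := by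
    filter_upwards [hRPU] with x hx
    simpa [ENNReal.ofReal_pow, ofReal_norm] using
      (tsum_ofReal_mem_Icc_iff (fun j => sq_nonneg ‖h j x‖) hp).mpr hx
  have hbdd (j : J) : MemLp (h j) ⊤ volume := memLp_top_of_ae_enorm_sq_le
    (hmeas j).aestronglyMeasurable hP (hweights.mono fun x hx => (ENNReal.le_tsum j).trans hx.2)
  choose F hF using fun j => exists_Lp_ae_eq_conj_mul (hbdd j)
  refine (isFrameWith_iff_enorm (mul_pos hp hm)).mpr ⟨fun _ => trivial, fun f _ => ?_⟩
  have hpieces (j : J) := ((isFrameWith_iff_enorm hm).mp ((hframe j).mono_bounds (hmj j) (hMj j))).2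
    (F j f) (subset_closure ⟨f, hF j f⟩)
  have hsum := tsum_enorm_sq_mem_Icc_of_ae_eq_conj_mul (fun j => hF j f) hweights
  rw [ENNReal.tsum_prod', ENNReal.ofReal_mul hp.le, ENNReal.ofReal_mul hP]
  simp_rw [fun j k => inner_eq_inner_of_ae_eq_mul (hF j f) (hhg j k)]
  exact ENNReal.tsum_tsum_mem_Icc_mul hpieces hsum

/-- Theorem: if `{h_j}` is an RPU with bounds `p,P` and for each `j`, `{g_{j,k}}_k`
is a frame for `W_j` with bounds `m_j,M_j` with `m = inf m_j > 0`, `M = sup M_j < ∞`,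
then `{h_j g_{j,k}}` is a frame for `L²(ℝ^d)` with bounds `pm, PM`. -/
theorem stmt4 {d : ℕ} {J K : Type*} [Countable J] [Countable K]
    (h : J → Rd d → ℂ) (hmeas : ∀ j, Measurable (h j)) (p P : ℝ) (hp : 0 < p)
    (hRPU : ∀ᵐ x ∂(volume : Measure (Rd d)),
      p ≤ ∑' j, ‖h j x‖ ^ 2 ∧ (∑' j, ‖h j x‖ ^ 2) ≤ P)
    (g : J → K → L2 d) (mj Mj : J → ℝ) (m M : ℝ) (hm : 0 < m)
    (hmj : ∀ j, m ≤ mj j) (hMj : ∀ j, Mj j ≤ M)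
    (hframe : ∀ j, IsFrameWith (g j) (Wspace (h j)) (mj j) (Mj j))
    (hg : J × K → L2 d)
    (hhg : ∀ j k, ∀ᵐ x ∂(volume : Measure (Rd d)), hg (j, k) x = h j x * g j k x) :
    IsFrameWith hg (Set.univ : Set (L2 d)) (p * m) (P * M) :=
  stmt4_general h hmeas p P hp hRPU g mj Mj m M hm hmj hMj hframe hg hhg
end
end

section
/- Let {h_j}_{j∈J} be a Riesz partition of unity with bounds p, P, and let {S_j}_{j∈J} and {Q_j}_{j∈J} be coverings of ℝ^d with Q_j ⊆ S_j and |h_j(x)|² ≥ c a.e. on Q_j for all j, for some constant c > 0. Suppose for each j, {g_{j,k}}_{k∈K} is a frame for K_{S_j} with bounds m_j, M_j, with m := inf_j m_j > 0 and M := sup_j M_j < ∞. Then {h_j g_{j,k} : j ∈ J, k ∈ K} is a frame for L²(ℝ^d) with frame bounds cm and PM. -/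
open MeasureTheory Filter Topology
noncomputable section
/-! For `f ∈ L²`, put `u_j := 1_{closure S_j} · conj h_j · f ∈ K_{S_j}`. Since `g_{j,k}` vanishes
off `closure S_j`, `⟪f, h_j g_{j,k}⟫ = ⟪u_j, g_{j,k}⟫`, so the `j`-th row of the frame sum lies
between `m ‖u_j‖²` and `M ‖u_j‖²`. Summing over `j`,
`∑_j ‖u_j‖² = ∫ (∑_j 1_{closure S_j} |h_j|²) |f|²`, and the weight in this integral is at most `P`
by the partition-of-unity bound and at least `c` because almost every point lies in some
`Q_j ⊆ S_j`. -/

open scoped ComplexConjugate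

section General

variable {α ι : Type*} [MeasurableSpace α] {μ : Measure α}

theorem MeasureTheory.L2.norm_sq_eq_integral_norm_sq {𝕜 E : Type*} [RCLike 𝕜]
    [NormedAddCommGroup E] [InnerProductSpace 𝕜 E] (f : Lp E 2 μ) :
    ‖f‖ ^ 2 = ∫ x, ‖f x‖ ^ 2 ∂μ := by
  rw [@norm_sq_eq_re_inner 𝕜, L2.inner_def, ← integral_re (L2.integrable_inner f f)]
  simp only [← norm_sq_eq_re_inner]

theorem aestronglyMeasurable_tsum [Countable ι] {w : ι → α → ℝ}
    (hw : ∀ i, AEStronglyMeasurable (w i) μ) (hsum : ∀ᵐ x ∂μ, Summable (w · x)) :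
    AEStronglyMeasurable (fun x => ∑' i, w i x) μ :=
  aestronglyMeasurable_of_tendsto_ae atTop
    (fun s => Finset.aestronglyMeasurable_fun_sum s fun i _ => hw i)
    (hsum.mono fun _ hx => hx.hasSum)

theorem summable_integral_mul_of_ae_tsum_mem_Icc [Countable ι] {w : ι → α → ℝ} {G : α → ℝ}
    {c P : ℝ} (hw : ∀ i, AEStronglyMeasurable (w i) μ) (hw0 : ∀ i x, 0 ≤ w i x)
    (hbounds : ∀ᵐ x ∂μ, Summable (w · x) ∧ c ≤ ∑' i, w i x ∧ ∑' i, w i x ≤ P)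
    (hG : Integrable G μ) (hG0 : 0 ≤ G) :
    Summable (fun i => ∫ x, w i x * G x ∂μ) ∧
      c * ∫ x, G x ∂μ ≤ ∑' i, ∫ x, w i x * G x ∂μ ∧
      ∑' i, ∫ x, w i x * G x ∂μ ≤ P * ∫ x, G x ∂μ := by
  have hsum : ∀ᵐ x ∂μ, Summable (w · x) := hbounds.mono fun _ hx => hx.1
  have hint : Integrable (fun x => (∑' i, w i x) * G x) μ := by
    refine (hG.const_mul P).mono' ((aestronglyMeasurable_tsum hw hsum).mul hG.1) ?_
    filter_upwards [hbounds] with x hx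
    rw [norm_mul, Real.norm_of_nonneg (tsum_nonneg (hw0 · x)), Real.norm_of_nonneg (hG0 x)]
    exact mul_le_mul_of_nonneg_right hx.2.2 (hG0 x)
  have hasSum : HasSum (fun i => ∫ x, w i x * G x ∂μ) (∫ x, (∑' i, w i x) * G x ∂μ) := by
    refine hasSum_integral_of_dominated_convergence (fun i x => w i x * G x)
      (fun i => (hw i).mul hG.1) (fun i => .of_forall fun x => ?_)
      (hsum.mono fun x hx => hx.mul_right (G x)) ?_
      (hsum.mono fun x hx => hx.hasSum.mul_right (G x))
    · rw [Real.norm_of_nonneg (mul_nonneg (hw0 i x) (hG0 x))]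
    · simpa only [tsum_mul_right] using hint
  rw [hasSum.tsum_eq, ← integral_const_mul, ← integral_const_mul]
  refine ⟨hasSum.summable, integral_mono_ae (hG.const_mul c) hint ?_,
    integral_mono_ae hint (hG.const_mul P) ?_⟩
  · filter_upwards [hbounds] with x hx
    exact mul_le_mul_of_nonneg_right hx.2.1 (hG0 x)
  · filter_upwards [hbounds] with x hx
    exact mul_le_mul_of_nonneg_right hx.2.2 (hG0 x)

theorem ae_tsum_indicator_mem_Icc [Countable ι] {Q T : ι → Set α} {φ : ι → α → ℝ} {c P : ℝ}
    (hQT : ∀ i, Q i ⊆ T i) (hQ : ∀ᵐ x ∂μ, x ∈ ⋃ i, Q i) (hφ0 : ∀ i x, 0 ≤ φ i x)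
    (hsum : ∀ᵐ x ∂μ, Summable (φ · x)) (hP : ∀ᵐ x ∂μ, ∑' i, φ i x ≤ P)
    (hc : ∀ i, ∀ᵐ x ∂μ, x ∈ Q i → c ≤ φ i x) :
    ∀ᵐ x ∂μ, Summable (fun i => (T i).indicator (φ i) x) ∧
      c ≤ ∑' i, (T i).indicator (φ i) x ∧ ∑' i, (T i).indicator (φ i) x ≤ P := by
  filter_upwards [hQ, hsum, hP, ae_all_iff.2 hc] with x hxQ hxsum hxP hxc
  have hle : ∀ i, (T i).indicator (φ i) x ≤ φ i x :=
    fun i => Set.indicator_le_self' (fun _ _ => hφ0 i x) x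
  have hnonneg : ∀ i, 0 ≤ (T i).indicator (φ i) x :=
    fun i => Set.indicator_nonneg (fun _ _ => hφ0 i x) x
  have hsumT : Summable fun i => (T i).indicator (φ i) x := hxsum.of_nonneg_of_le hnonneg hle
  obtain ⟨i, hi⟩ := Set.mem_iUnion.1 hxQ
  refine ⟨hsumT, ?_, (hsumT.tsum_le_tsum hle hxsum).trans hxP⟩
  calc c ≤ (T i).indicator (φ i) x := by rw [Set.indicator_of_mem (hQT i hi)]; exact hxc i hi
    _ ≤ _ := hsumT.le_tsum i fun j _ => hnonneg j

theorem tsum_prod_bounds_of_row_bounds {K : Type*} {T : ι × K → ℝ} (hT : 0 ≤ T) {a : ι → ℝ}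
    (ha : Summable a) {m M : ℝ} (hrow : ∀ i, Summable fun k => T (i, k))
    (hlow : ∀ i, m * a i ≤ ∑' k, T (i, k)) (hup : ∀ i, ∑' k, T (i, k) ≤ M * a i) :
    m * ∑' i, a i ≤ ∑' q, T q ∧ ∑' q, T q ≤ M * ∑' i, a i := by
  have hcol : Summable fun i => ∑' k, T (i, k) :=
    (ha.mul_left M).of_nonneg_of_le (fun i => tsum_nonneg fun k => hT (i, k)) hup
  have hTsum : Summable T := (summable_prod_of_nonneg hT).2 ⟨hrow, hcol⟩
  rw [hTsum.tsum_prod' hrow, ← tsum_mul_left, ← tsum_mul_left]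
  exact ⟨(ha.mul_left m).tsum_le_tsum hlow hcol, hcol.tsum_le_tsum hup (ha.mul_left M)⟩

theorem mul_mul_le_and_le_mul_mul {c m P M A T F : ℝ} (hc : 0 < c) (hm : 0 < m) (hF : 0 ≤ F)
    (hcA : c * F ≤ A) (hAP : A ≤ P * F) (hlo : m * A ≤ T) (hup : T ≤ M * A) :
    c * m * F ≤ T ∧ T ≤ P * M * F := by
  refine ⟨by nlinarith, ?_⟩
  rcases le_or_gt 0 M with hM | hM
  · nlinarith
  · -- `m A ≤ T ≤ M A` with `M < 0 < m` forces `A = 0`, hence `F = 0`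
    have hA : A ≤ 0 := by nlinarith
    obtain rfl : F = 0 := by nlinarith
    nlinarith

end General

section Frames

variable {d : ℕ}

theorem IsFrameWith.mono {J : Type*} {g : J → L2 d} {F : Set (L2 d)} {m M m' M' : ℝ}
    (hg : IsFrameWith g F m M) (hm : m' ≤ m) (hM : M ≤ M') : IsFrameWith g F m' M' :=
  ⟨hg.1, fun f hf => ⟨(mul_le_mul_of_nonneg_right hm (sq_nonneg _)).trans (hg.2 f hf).1,
    (hg.2 f hf).2.trans (mul_le_mul_of_nonneg_right hM (sq_nonneg _))⟩⟩

theorem IsFrameWith.summable {J : Type*} {g : J → L2 d} {F : Set (L2 d)} {m M : ℝ}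
    (hg : IsFrameWith g F m M) (hm : 0 < m) {f : L2 d} (hf : f ∈ F) :
    Summable fun j => ‖(inner ℂ f (g j) : ℂ)‖ ^ 2 := by
  by_contra hns
  have hf0 : f = 0 := by
    by_contra hf0
    have := (hg.2 f hf).1
    rw [tsum_eq_zero_of_not_summable hns] at this
    linarith [mul_pos hm (pow_pos (norm_pos_iff.2 hf0) 2)]
  simp [hf0] at hns

theorem exists_mem_Ksp_ae_eq_indicator_mul (S : Set (Rd d)) {ψ : Rd d → ℂ}
    (hψ : AEStronglyMeasurable ψ volume) {C : ℝ} (hC : ∀ᵐ x ∂volume, ‖ψ x‖ ≤ C) (f : L2 d) :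
    ∃ u ∈ Ksp S, ⇑u =ᵐ[volume] (closure S).indicator (fun x => ψ x * f x) := by
  have hmem : MemLp ((closure S).indicator fun x => ψ x * f x) 2 volume := by
    refine MemLp.indicator isClosed_closure.measurableSet
      ((Lp.memLp f).of_le_mul (c := C) (hψ.mul (Lp.aestronglyMeasurable f)) ?_)
    filter_upwards [hC] with x hx
    rw [norm_mul]
    exact mul_le_mul_of_nonneg_right hx (norm_nonneg _)
  refine ⟨hmem.toLp _, ?_, hmem.coeFn_toLp⟩
  filter_upwards [hmem.coeFn_toLp] with x hx hxS
  rw [hx, Set.indicator_of_notMem hxS]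

theorem inner_mul_eq_inner_of_mem_Ksp {S : Set (Rd d)} {φ : Rd d → ℂ} {f g φg u : L2 d}
    (hg : g ∈ Ksp S) (hφg : ⇑φg =ᵐ[volume] fun x => φ x * g x)
    (hu : ⇑u =ᵐ[volume] (closure S).indicator (fun x => conj (φ x) * f x)) :
    (inner ℂ f φg : ℂ) = inner ℂ u g := by
  rw [L2.inner_def, L2.inner_def]
  refine integral_congr_ae ?_
  filter_upwards [hg, hφg, hu] with x hgx hφgx hux
  simp only [RCLike.inner_apply, hφgx, hux]
  by_cases hxS : x ∈ closure S
  · rw [Set.indicator_of_mem hxS, map_mul, Complex.conj_conj]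
    ring
  · rw [Set.indicator_of_notMem hxS, hgx hxS]
    simp

theorem norm_sq_eq_integral_of_ae_eq_indicator {S : Set (Rd d)} {φ : Rd d → ℂ} {f u : L2 d}
    (hu : ⇑u =ᵐ[volume] (closure S).indicator (fun x => conj (φ x) * f x)) :
    ‖u‖ ^ 2 = ∫ x, (closure S).indicator (fun y => ‖φ y‖ ^ 2) x * ‖f x‖ ^ 2 := by
  rw [L2.norm_sq_eq_integral_norm_sq (𝕜 := ℂ)]
  refine integral_congr_ae ?_
  filter_upwards [hu] with x hx
  by_cases hxS : x ∈ closure S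
  · simp [hx, hxS, mul_pow]
  · simp [hx, hxS]

theorem summable_norm_sq_and_bounds_of_ae_eq_indicator {J : Type*} [Countable J]
    {S Q : J → Set (Rd d)} (hQS : ∀ j, Q j ⊆ S j) (hQ : ∀ᵐ x ∂volume, x ∈ ⋃ j, Q j)
    {h : J → Rd d → ℂ} (hmeas : ∀ j, Measurable (h j)) {P c : ℝ}
    (hsq : ∀ᵐ x ∂volume, Summable (fun j => ‖h j x‖ ^ 2) ∧ ∑' j, ‖h j x‖ ^ 2 ≤ P)
    (hlow : ∀ j, ∀ᵐ x ∂volume, x ∈ Q j → c ≤ ‖h j x‖ ^ 2) {f : L2 d} {u : J → L2 d}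
    (hu : ∀ j, ⇑(u j) =ᵐ[volume] (closure (S j)).indicator (fun x => conj (h j x) * f x)) :
    Summable (fun j => ‖u j‖ ^ 2) ∧
      c * ‖f‖ ^ 2 ≤ ∑' j, ‖u j‖ ^ 2 ∧ ∑' j, ‖u j‖ ^ 2 ≤ P * ‖f‖ ^ 2 := by
  have hweight := ae_tsum_indicator_mem_Icc (fun j => (hQS j).trans subset_closure) hQ
    (fun j x => sq_nonneg ‖h j x‖) (hsq.mono fun _ hx => hx.1) (hsq.mono fun _ hx => hx.2) hlow
  simpa only [← norm_sq_eq_integral_of_ae_eq_indicator (hu _),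
    ← L2.norm_sq_eq_integral_norm_sq (𝕜 := ℂ)] using summable_integral_mul_of_ae_tsum_mem_Icc
    (fun j => (((hmeas j).norm.pow_const 2).indicator
      isClosed_closure.measurableSet).aestronglyMeasurable)
    (fun j x => Set.indicator_nonneg (fun _ _ => sq_nonneg _) x) hweight
    ((Lp.memLp f).integrable_norm_pow two_ne_zero) (fun x => sq_nonneg ‖f x‖)

end Frames

theorem stmt6_general {d : ℕ} {J K : Type*} [Countable J]
    (S Q : J → Set (Rd d))
    (hQS : ∀ j, Q j ⊆ S j)
    (hQcover : volume ((Set.univ : Set (Rd d)) \ ⋃ j, Q j) = 0)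
    (h : J → Rd d → ℂ) (hmeas : ∀ j, Measurable (h j))
    (p P c : ℝ) (hp : 0 < p) (hc : 0 < c)
    (hRPU : ∀ᵐ x ∂(volume : Measure (Rd d)),
      p ≤ ∑' j, ‖h j x‖ ^ 2 ∧ (∑' j, ‖h j x‖ ^ 2) ≤ P)
    (hlow : ∀ j, ∀ᵐ x ∂(volume : Measure (Rd d)), x ∈ Q j → c ≤ ‖h j x‖ ^ 2)
    (g : J → K → L2 d) (mj Mj : J → ℝ) (m M : ℝ) (hm : 0 < m)
    (hmj : ∀ j, m ≤ mj j) (hMj : ∀ j, Mj j ≤ M)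
    (hframe : ∀ j, IsFrameWith (g j) (Ksp (S j)) (mj j) (Mj j))
    (hg : J × K → L2 d)
    (hhg : ∀ j k, ∀ᵐ x ∂(volume : Measure (Rd d)), hg (j, k) x = h j x * g j k x) :
    IsFrameWith hg (Set.univ : Set (L2 d)) (c * m) (P * M) := by
  refine ⟨fun _ => trivial, fun f _ => ?_⟩
  have hsq : ∀ᵐ x ∂volume, Summable (fun j => ‖h j x‖ ^ 2) ∧ ∑' j, ‖h j x‖ ^ 2 ≤ P := by
    filter_upwards [hRPU] with x hx
    -- `0 < p` excludes the junk value `0` of a divergent `tsum`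
    exact ⟨by_contra fun hns => by linarith [hx.1, tsum_eq_zero_of_not_summable hns], hx.2⟩
  have hbound j : ∀ᵐ x ∂volume, ‖conj (h j x)‖ ≤ √P := by
    filter_upwards [hsq] with x hx
    rw [RCLike.norm_conj, ← abs_norm]
    exact Real.abs_le_sqrt ((hx.1.le_tsum j fun i _ => sq_nonneg _).trans hx.2)
  choose u huS hu using fun j => exists_mem_Ksp_ae_eq_indicator_mul (S j)
    (Complex.continuous_conj.measurable.comp (hmeas j)).aestronglyMeasurable (hbound j) f
  have hinner j k : inner ℂ f (hg (j, k)) = inner ℂ (u j) (g j k) :=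
    inner_mul_eq_inner_of_mem_Ksp ((hframe j).1 k) (hhg j k) (hu j)
  have hframe' j : IsFrameWith (g j) (Ksp (S j)) m M := (hframe j).mono (hmj j) (hMj j)
  have hQ : ∀ᵐ x ∂volume, x ∈ ⋃ j, Q j := by
    simpa [measure_eq_zero_iff_ae_notMem] using hQcover
  obtain ⟨hsum, hcA, hAP⟩ := summable_norm_sq_and_bounds_of_ae_eq_indicator hQS hQ hmeas hsq hlow hu
  obtain ⟨hlo, hup⟩ := tsum_prod_bounds_of_row_bounds (T := fun q => ‖inner ℂ f (hg q)‖ ^ 2)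
    (fun _ => sq_nonneg _) hsum
    (fun j => by simpa only [hinner] using (hframe' j).summable hm (huS j))
    (fun j => by simpa only [hinner] using ((hframe' j).2 (u j) (huS j)).1)
    (fun j => by simpa only [hinner] using ((hframe' j).2 (u j) (huS j)).2)
  exact mul_mul_le_and_le_mul_mul hc hm (sq_nonneg _) hcA hAP hlo hup

/-- Corollary: `{h_j}` an RPU with bounds `p,P`; `{S_j}`, `{Q_j}` coverings of `ℝ^d`
with `Q_j ⊆ S_j` and `|h_j|² ≥ c` a.e. on `Q_j`; `{g_{j,k}}_k` a frame for `K_{S_j}`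
with bounds `m_j, M_j`, `m = inf m_j > 0`, `M = sup M_j < ∞`. Then `{h_j g_{j,k}}`
is a frame for `L²(ℝ^d)` with bounds `cm, PM`. -/
theorem stmt6 {d : ℕ} {J K : Type*} [Countable J] [Countable K]
    (S Q : J → Set (Rd d)) (hSm : ∀ j, MeasurableSet (S j)) (hQm : ∀ j, MeasurableSet (Q j))
    (hQS : ∀ j, Q j ⊆ S j)
    (hScover : volume ((Set.univ : Set (Rd d)) \ ⋃ j, S j) = 0)
    (hQcover : volume ((Set.univ : Set (Rd d)) \ ⋃ j, Q j) = 0)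
    (h : J → Rd d → ℂ) (hmeas : ∀ j, Measurable (h j))
    (p P c : ℝ) (hp : 0 < p) (hc : 0 < c)
    (hRPU : ∀ᵐ x ∂(volume : Measure (Rd d)),
      p ≤ ∑' j, ‖h j x‖ ^ 2 ∧ (∑' j, ‖h j x‖ ^ 2) ≤ P)
    (hlow : ∀ j, ∀ᵐ x ∂(volume : Measure (Rd d)), x ∈ Q j → c ≤ ‖h j x‖ ^ 2)
    (g : J → K → L2 d) (mj Mj : J → ℝ) (m M : ℝ) (hm : 0 < m)
    (hmj : ∀ j, m ≤ mj j) (hMj : ∀ j, Mj j ≤ M)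
    (hframe : ∀ j, IsFrameWith (g j) (Ksp (S j)) (mj j) (Mj j))
    (hg : J × K → L2 d)
    (hhg : ∀ j k, ∀ᵐ x ∂(volume : Measure (Rd d)), hg (j, k) x = h j x * g j k x) :
    IsFrameWith hg (Set.univ : Set (L2 d)) (c * m) (P * M) :=
  stmt6_general S Q hQS hQcover h hmeas p P c hp hc hRPU hlow g mj Mj m M hm hmj hMj hframe hg hhg
end
end

section
/- Let A be an expansive d×d real matrix (all eigenvalues have modulus > 1) and V ⊂ ℝ^d a bounded set such that B(0,ε) ∩ V = ∅ for some ε > 0 and ∪_{j∈ℤ} A^j V = ℝ^d \ {0}. Then the covering index of the family {A^j V}_{j∈ℤ} is finite, i.e., there exists n ≥ 1 such that for every x ∈ ℝ^d, the number of j ∈ ℤ with x ∈ A^j V is at most n. -/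
open MeasureTheory Filter Topology
noncomputable section
/-- A real matrix is expansive if all its (complex) eigenvalues have modulus `> 1`. -/
def Expansive {d : ℕ} (A : Matrix (Fin d) (Fin d) ℝ) : Prop :=
  ∀ μ : ℂ, μ ∈ spectrum ℂ (A.map Complex.ofReal) → 1 < ‖μ‖
/-- The linear action of the integer power `A^j` of `A ∈ GL_d(ℝ)` on `ℝ^d`. -/
def mv {d : ℕ} (A : GL (Fin d) ℝ) (j : ℤ) (x : Rd d) : Rd d :=
  ((A ^ j : GL (Fin d) ℝ) : Matrix (Fin d) (Fin d) ℝ).mulVec x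

attribute [local instance] Matrix.linftyOpNormedRing Matrix.linftyOpNormedAlgebra

namespace Stmt8Aux
open scoped ENNReal NNReal

variable {d : ℕ}

local instance : CompleteSpace (Matrix (Fin d) (Fin d) ℂ) :=
  FiniteDimensional.complete ℂ _

lemma nnnorm_map_ofReal (M : Matrix (Fin d) (Fin d) ℝ) :
    ‖M.map Complex.ofReal‖₊ = ‖M‖₊ := by
  rw [Matrix.linfty_opNNNorm_def, Matrix.linfty_opNNNorm_def]
  simp [Matrix.map_apply]

lemma exists_pow_small (hd : 0 < d) (A : GL (Fin d) ℝ)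
    (hA : Expansive (A : Matrix (Fin d) (Fin d) ℝ)) {δ : ℝ} (hδ : 0 < δ) :
    ∃ M : ℕ, ∀ n ≥ M,
      ‖((A⁻¹ : GL (Fin d) ℝ) : Matrix (Fin d) (Fin d) ℝ) ^ n‖ < δ := by
  haveI : Nonempty (Fin d) := ⟨⟨0, hd⟩⟩
  set f : Matrix (Fin d) (Fin d) ℝ →+* Matrix (Fin d) (Fin d) ℂ :=
    (Complex.ofRealHom).mapMatrix with hf
  set u : (Matrix (Fin d) (Fin d) ℂ)ˣ := Units.map f.toMonoidHom A with hu
  set C : Matrix (Fin d) (Fin d) ℝ := ((A⁻¹ : GL (Fin d) ℝ) : Matrix (Fin d) (Fin d) ℝ)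
    with hC
  set B : Matrix (Fin d) (Fin d) ℂ := f C with hB
  have hBu : B = ((u⁻¹ : (Matrix (Fin d) (Fin d) ℂ)ˣ) : Matrix (Fin d) (Fin d) ℂ) := rfl
  -- every element of the spectrum of `B` has norm < 1
  have hspec : ∀ z ∈ spectrum ℂ B, ‖z‖₊ < 1 := by
    intro z hz
    have hz0 : z ≠ 0 := by
      intro h
      rw [h, hBu] at hz
      exact ((spectrum.zero_mem_iff ℂ).mp hz) (u⁻¹).isUnit
    have hzinv : z⁻¹ ∈ spectrum ℂ ((u : Matrix (Fin d) (Fin d) ℂ)) := by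
      have h := (spectrum.inv_mem_iff (r := Units.mk0 z hz0) (a := u⁻¹))
      rw [inv_inv] at h
      simpa using h.mp (by simpa [hBu] using hz)
    have hzu : (u : Matrix (Fin d) (Fin d) ℂ) =
        ((A : Matrix (Fin d) (Fin d) ℝ).map Complex.ofReal) := rfl
    rw [hzu] at hzinv
    have h1 := hA z⁻¹ hzinv
    rw [norm_inv] at h1
    have hzpos : 0 < ‖z‖ := norm_pos_iff.mpr hz0
    have : ‖z‖ < 1 := by
      have := (one_lt_inv_iff₀ (a := ‖z‖)).mp h1
      exact this.2
    exact_mod_cast this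
  haveI : Nontrivial (Matrix (Fin d) (Fin d) ℂ) := inferInstance
  have hρ : spectralRadius ℂ B < ((1 : ℝ≥0) : ℝ≥0∞) :=
    spectrum.spectralRadius_lt_of_forall_lt B hspec
  obtain ⟨c, hc1, hc2⟩ := exists_between hρ
  have hc2' : c < 1 := by simpa using hc2
  have hlim := spectrum.pow_nnnorm_pow_one_div_tendsto_nhds_spectralRadius B
  have h1 : ∀ᶠ n : ℕ in atTop, (‖B ^ n‖₊ : ℝ≥0∞) ^ (1 / (n : ℝ)) < c :=
    hlim.eventually_lt_const hc1
  have h2 : Tendsto (fun n : ℕ => c ^ n) atTop (𝓝 0) :=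
    ENNReal.tendsto_pow_atTop_nhds_zero_of_lt_one hc2'
  have h3 : ∀ᶠ n : ℕ in atTop, c ^ n < ENNReal.ofReal δ :=
    h2.eventually_lt_const (by simpa using ENNReal.ofReal_pos.mpr hδ)
  obtain ⟨M, hM⟩ := ((h1.and h3).and (eventually_ge_atTop 1)).exists_forall_of_atTop
  refine ⟨M, fun n hn => ?_⟩
  obtain ⟨⟨e1, e3⟩, e4⟩ := hM n hn
  have hn0 : (n : ℝ) ≠ 0 := by positivity
  have key : (‖B ^ n‖₊ : ℝ≥0∞) < c ^ n := by
    have h5 := ENNReal.rpow_lt_rpow e1 (by positivity : (0:ℝ) < (n : ℝ))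
    rwa [← ENNReal.rpow_mul, one_div, inv_mul_cancel₀ hn0, ENNReal.rpow_one,
      ENNReal.rpow_natCast] at h5
  have key2 : (‖B ^ n‖₊ : ℝ≥0∞) < ENNReal.ofReal δ := key.trans e3
  have hBn : ‖B ^ n‖₊ = ‖C ^ n‖₊ := by
    rw [hB, ← map_pow]
    exact nnnorm_map_ofReal (C ^ n)
  rw [hBn] at key2
  have key3 : ENNReal.ofReal ‖C ^ n‖ < ENNReal.ofReal δ := by
    rw [ofReal_norm]; exact key2
  exact (ENNReal.ofReal_lt_ofReal_iff hδ).mp key3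

end Stmt8Aux

/-- Proposition: if `A` is expansive, `V` is bounded, avoids a ball around `0`, and
`∪_j A^j V = ℝ^d \ {0}`, then the covering index of `{A^j V}` is finite. -/
theorem stmt8 {d : ℕ} (A : GL (Fin d) ℝ)
    (hA : Expansive (A : Matrix (Fin d) (Fin d) ℝ))
    (V : Set (Rd d)) (hVb : Bornology.IsBounded V)
    (ε : ℝ) (hε : 0 < ε) (hdisj : Metric.ball (0 : Rd d) ε ∩ V = ∅)
    (hcover : (⋃ j : ℤ, mv A j '' V) = {x : Rd d | x ≠ 0}) :
    ∃ n : ℕ, 1 ≤ n ∧ ∀ x : Rd d,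
      {j : ℤ | x ∈ mv A j '' V}.Finite ∧ {j : ℤ | x ∈ mv A j '' V}.ncard ≤ n := by
  have hVnorm : ∀ v ∈ V, ε ≤ ‖v‖ := by
    intro v hv
    by_contra h
    push_neg at h
    have : v ∈ Metric.ball (0 : Rd d) ε ∩ V := ⟨by simpa [mem_ball_zero_iff] using h, hv⟩
    rw [hdisj] at this
    exact this
  rcases Set.eq_empty_or_nonempty V with hV | hV
  · refine ⟨1, le_rfl, fun x => ?_⟩
    have hS : {j : ℤ | x ∈ mv A j '' V} = ∅ := by simp [hV]
    rw [hS]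
    simp
  obtain ⟨v0, hv0⟩ := hV
  have hv0ne : v0 ≠ 0 := by
    intro h
    have h1 := hVnorm v0 hv0
    rw [h] at h1
    simp at h1
    exact absurd h1 (not_le.mpr hε)
  have hd : 0 < d := by
    rcases Nat.eq_zero_or_pos d with h | h
    · exfalso
      apply hv0ne
      subst h
      ext i
      exact absurd i.2 (by omega)
    · exact h
  -- a bound on V
  obtain ⟨R0, hR0⟩ := hVb.subset_closedBall (0 : Rd d)
  set R := max R0 1 with hR
  have hRpos : 0 < R := lt_of_lt_of_le one_pos (le_max_right _ _)
  have hVR : ∀ v ∈ V, ‖v‖ ≤ R := by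
    intro v hv
    have := hR0 hv
    rw [Metric.mem_closedBall, dist_zero_right] at this
    exact this.trans (le_max_left _ _)
  obtain ⟨M, hM⟩ := Stmt8Aux.exists_pow_small hd A hA (div_pos hε hRpos)
  refine ⟨2 * M + 1, by omega, fun x => ?_⟩
  rcases Set.eq_empty_or_nonempty {j : ℤ | x ∈ mv A j '' V} with hS | ⟨j0, hj0⟩
  · rw [hS]; simp
  -- key: any two indices in the set are within distance M
  have key : ∀ j1 j2 : ℤ, x ∈ mv A j1 '' V → x ∈ mv A j2 '' V → j1 ≤ j2 → j2 - j1 < M := by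
    intro j1 j2 h1 h2 hle
    obtain ⟨v1, hv1, hx1⟩ := h1
    obtain ⟨v2, hv2, hx2⟩ := h2
    set n : ℕ := (j2 - j1).toNat with hn
    have hnj : (n : ℤ) = j2 - j1 := Int.toNat_of_nonneg (by omega)
    by_contra hcon
    push_neg at hcon
    have hnM : M ≤ n := by omega
    -- v2 = C^n mulVec v1
    have hmv : ∀ (j k : ℤ) (y : Rd d), mv A j (mv A k y) = mv A (j + k) y := by
      intro j k y
      simp only [mv]
      rw [Matrix.mulVec_mulVec, ← Units.val_mul, ← zpow_add]
    have e1 : mv A (-j2) x = v2 := by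
      rw [← hx2, hmv, neg_add_cancel]
      simp [mv]
    have e2 : mv A (-j2) x = mv A (j1 - j2) v1 := by
      rw [← hx1, hmv]
      ring_nf
    set C : Matrix (Fin d) (Fin d) ℝ := ((A⁻¹ : GL (Fin d) ℝ) : Matrix (Fin d) (Fin d) ℝ)
      with hC
    have hAe : ((A ^ (j1 - j2) : GL (Fin d) ℝ) : Matrix (Fin d) (Fin d) ℝ) = C ^ n := by
      have h : j1 - j2 = -(n : ℤ) := by omega
      rw [h, zpow_neg, ← inv_zpow, zpow_natCast, hC]
      exact Units.val_pow_eq_pow_val _ _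
    have e3 : mv A (j1 - j2) v1 = (C ^ n).mulVec v1 := by
      simp only [mv]
      rw [hAe]
    have hv2eq : v2 = (C ^ n).mulVec v1 := by rw [← e1, e2, e3]
    have hb1 : ε ≤ ‖v2‖ := hVnorm v2 hv2
    have hb2 : ‖v2‖ ≤ ‖C ^ n‖ * ‖v1‖ := by
      rw [hv2eq]
      exact Matrix.linfty_opNorm_mulVec _ _
    have hb3 : ‖C ^ n‖ * ‖v1‖ ≤ ‖C ^ n‖ * R := by
      exact mul_le_mul_of_nonneg_left (hVR v1 hv1) (norm_nonneg _)
    have hb4 : ‖C ^ n‖ < ε / R := hM n hnM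
    have : ‖C ^ n‖ * R < ε := by
      have h' := mul_lt_mul_of_pos_right hb4 hRpos
      rwa [div_mul_cancel₀ _ (ne_of_gt hRpos)] at h'
    linarith
  have hsub : {j : ℤ | x ∈ mv A j '' V} ⊆ ↑(Finset.Ioo (j0 - M) (j0 + M)) := by
    intro j hj
    simp only [Finset.coe_Ioo, Set.mem_Ioo]
    rcases le_total j j0 with h | h
    · have := key j j0 hj hj0 h
      constructor <;> omega
    · have := key j0 j hj0 hj h
      constructor <;> omega
  constructor
  · exact Set.Finite.subset (Finset.Ioo _ _).finite_toSet hsub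
  · calc {j : ℤ | x ∈ mv A j '' V}.ncard ≤ (↑(Finset.Ioo (j0 - M) (j0 + M)) : Set ℤ).ncard :=
        Set.ncard_le_ncard hsub (Finset.Ioo _ _).finite_toSet
      _ = (Finset.Ioo (j0 - M) (j0 + M)).card := Set.ncard_coe_finset _
      _ ≤ 2 * M + 1 := by
        rw [Int.card_Ioo]
        omega
end
end

section
/- Let A be an expansive d×d real matrix, Q ⊂ ℝ^d compact with 0 ∉ Q and ∪_{j∈ℤ} A^j Q = ℝ^d \ {0}. Let 0 < ε < dist(0,Q), set Q_ε = {x : dist(x,Q) ≤ ε}, and let h be a measurable function with 0 ≤ |h|² ≤ c₂ everywhere, |h|² ≥ c₁ > 0 on Q, and h = 0 outside Q_ε. Then the family {h_j}_{j∈ℤ}, h_j(x) = h(A^{-j}x), satisfies: supp h_j ⊆ A^j Q_ε for each j, and there exist constants 0 < p ≤ P < ∞ with p ≤ Σ_{j∈ℤ} |h_j(x)|² ≤ P for all x ≠ 0. In particular one may take p = c₁ and P = ρ·c₂, where ρ is the (finite) covering index of {A^j Q_ε}_{j∈ℤ}. -/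
open MeasureTheory Filter Topology
noncomputable section
open Matrix in
open scoped Matrix.Norms.L2Operator in
theorem aux_decay (d : ℕ) (hd : 0 < d) (B : Matrix (Fin d) (Fin d) ℂ)
    (hs : ∀ μ ∈ spectrum ℂ B, ‖μ‖ < 1) :
    Tendsto (fun n : ℕ => ‖B ^ n‖) atTop (nhds 0) := by
  haveI : Nonempty (Fin d) := ⟨⟨0, hd⟩⟩
  haveI : Nontrivial (Matrix (Fin d) (Fin d) ℂ) := inferInstance
  have h1 : spectralRadius ℂ B < 1 := by
    have := spectrum.spectralRadius_lt_of_forall_lt (a := B) (r := 1) ?_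
    · simpa using this
    · intro z hz; simpa [← NNReal.coe_lt_coe] using hs z hz
  obtain ⟨θ, hθ1, hθ2⟩ := ENNReal.lt_iff_exists_nnreal_btwn.mp h1
  have hθ2' : (θ : ℝ) < 1 := by exact_mod_cast ENNReal.coe_lt_one_iff.mp hθ2
  have hg := spectrum.pow_nnnorm_pow_one_div_tendsto_nhds_spectralRadius B
  have hev : ∀ᶠ n : ℕ in atTop, (‖B ^ n‖₊ : ENNReal) ^ (1 / (n:ℝ)) < θ :=
    hg.eventually_lt_const hθ1
  have hev2 : ∀ᶠ n : ℕ in atTop, ‖B ^ n‖ ≤ (θ : ℝ) ^ n := by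
    filter_upwards [hev, eventually_ge_atTop 1] with n hn hn1
    have hne : (n : ℝ) ≠ 0 := by positivity
    have : ((‖B ^ n‖₊ : ENNReal) ^ (1 / (n:ℝ))) ^ (n : ℝ) ≤ (θ : ENNReal) ^ (n : ℝ) :=
      ENNReal.rpow_le_rpow hn.le (by positivity)
    rw [show ((θ:ENNReal)) ^ (n:ℝ) = (θ:ENNReal) ^ n from ENNReal.rpow_natCast _ n,
      ← ENNReal.rpow_mul, one_div,
      inv_mul_cancel₀ hne, ENNReal.rpow_one, ← ENNReal.coe_pow, ENNReal.coe_le_coe] at this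
    calc ‖B ^ n‖ = (‖B ^ n‖₊ : ℝ) := rfl
      _ ≤ (θ:ℝ) ^ n := by exact_mod_cast this
  have hsq : Tendsto (fun n : ℕ => (θ:ℝ) ^ n) atTop (nhds 0) :=
    tendsto_pow_atTop_nhds_zero_of_lt_one θ.2 hθ2'
  refine squeeze_zero' ?_ hev2 hsq
  filter_upwards with n; positivity

theorem aux_spec_inv {d : ℕ} (A : GL (Fin d) ℝ)
    (hA : ∀ μ : ℂ, μ ∈ spectrum ℂ (((A : Matrix (Fin d) (Fin d) ℝ)).map Complex.ofReal) → 1 < ‖μ‖) :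
    ∀ μ : ℂ, μ ∈ spectrum ℂ
      ((((A⁻¹ : GL (Fin d) ℝ) : Matrix (Fin d) (Fin d) ℝ)).map Complex.ofReal) → ‖μ‖ < 1 := by
  intro μ hμ
  set f : Matrix (Fin d) (Fin d) ℝ →+* Matrix (Fin d) (Fin d) ℂ :=
    (Complex.ofRealHom.mapMatrix) with hf
  set u : (Matrix (Fin d) (Fin d) ℂ)ˣ := Units.map f.toMonoidHom A with hu
  have hval : (u : Matrix (Fin d) (Fin d) ℂ)
      = ((A : Matrix (Fin d) (Fin d) ℝ)).map Complex.ofReal := rfl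
  have hvalinv : ((u⁻¹ : (Matrix (Fin d) (Fin d) ℂ)ˣ) : Matrix (Fin d) (Fin d) ℂ)
      = (((A⁻¹ : GL (Fin d) ℝ) : Matrix (Fin d) (Fin d) ℝ)).map Complex.ofReal := by
    rw [hu, ← map_inv]; rfl
  rw [← hvalinv] at hμ
  have hμ0 : μ ≠ 0 := by
    intro h0
    rw [h0, spectrum.zero_mem_iff] at hμ
    exact hμ (u⁻¹).isUnit
  have := (spectrum.inv_mem_iff (r := Units.mk0 μ hμ0) (a := u⁻¹)).mp hμ
  rw [inv_inv] at this
  have h1 := hA μ⁻¹ (by rw [← hval]; simpa using this)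
  have : ‖μ‖ * ‖μ⁻¹‖ = 1 := by
    rw [← norm_mul, mul_inv_cancel₀ hμ0, norm_one]
  nlinarith [norm_nonneg μ, norm_nonneg μ⁻¹]

open Matrix in
open scoped Matrix.Norms.L2Operator in
theorem aux_mulVec_norm_le {d : ℕ} (M : Matrix (Fin d) (Fin d) ℝ) (x : Fin d → ℝ) :
    ‖M.mulVec x‖ ≤ ‖M.map Complex.ofReal‖ * (Real.sqrt d * ‖x‖) := by
  set xc : EuclideanSpace ℂ (Fin d) := (WithLp.equiv 2 _).symm (fun i => (x i : ℂ)) with hxc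
  have key : toEuclideanCLM (𝕜 := ℂ) (M.map Complex.ofReal) xc
      = (WithLp.equiv 2 _).symm (fun i => ((M.mulVec x i : ℝ) : ℂ)) := by
    rw [hxc, WithLp.equiv_symm_apply, toEuclideanCLM_toLp]
    congr 1
    funext i
    simp [Matrix.toLin'_apply, Matrix.mulVec, dotProduct]
  have hxcnorm : ‖xc‖ ≤ Real.sqrt d * ‖x‖ := by
    rw [EuclideanSpace.norm_eq]
    calc Real.sqrt (∑ i, ‖xc i‖ ^ 2) ≤ Real.sqrt (∑ _i : Fin d, ‖x‖ ^ 2) := by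
          apply Real.sqrt_le_sqrt
          apply Finset.sum_le_sum
          intro i _
          have h1 : ‖xc i‖ = ‖x i‖ := by simp [hxc]
          rw [h1]
          exact pow_le_pow_left₀ (norm_nonneg _) (norm_le_pi_norm x i) 2
      _ = Real.sqrt d * ‖x‖ := by
          rw [Finset.sum_const, Finset.card_univ, Fintype.card_fin, nsmul_eq_mul,
            Real.sqrt_mul (by positivity), Real.sqrt_sq (norm_nonneg _)]
  have hop : ‖toEuclideanCLM (𝕜 := ℂ) (M.map Complex.ofReal) xc‖
      ≤ ‖M.map Complex.ofReal‖ * (Real.sqrt d * ‖x‖) := by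
    calc ‖toEuclideanCLM (𝕜 := ℂ) (M.map Complex.ofReal) xc‖
        ≤ ‖toEuclideanCLM (𝕜 := ℂ) (M.map Complex.ofReal)‖ * ‖xc‖ :=
          (toEuclideanCLM (𝕜 := ℂ) (M.map Complex.ofReal)).le_opNorm xc
      _ ≤ ‖M.map Complex.ofReal‖ * (Real.sqrt d * ‖x‖) := by
          rw [← Matrix.cstar_norm_def]
          exact mul_le_mul_of_nonneg_left hxcnorm (norm_nonneg _)
  rw [key] at hop
  rw [pi_norm_le_iff_of_nonneg (by positivity)]
  intro i
  refine le_trans ?_ hop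
  have : ‖M.mulVec x i‖ = ‖((WithLp.equiv 2 _).symm
      (fun i => ((M.mulVec x i : ℝ) : ℂ)) : EuclideanSpace ℂ (Fin d)) i‖ := by simp
  rw [this]
  set y : EuclideanSpace ℂ (Fin d) := (WithLp.equiv 2 _).symm (fun i => ((M.mulVec x i : ℝ) : ℂ))
  rw [EuclideanSpace.norm_eq]
  have hsum : ‖y i‖^2 ≤ ∑ j, ‖y j‖^2 :=
    Finset.single_le_sum (f := fun j => ‖y j‖^2) (fun j _ => by positivity) (Finset.mem_univ i)
  calc ‖y i‖ = Real.sqrt (‖y i‖^2) := (Real.sqrt_sq (norm_nonneg _)).symm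
    _ ≤ _ := Real.sqrt_le_sqrt hsum

open Matrix in
theorem aux_contract {d : ℕ} (hd : 0 < d) (B : Matrix (Fin d) (Fin d) ℝ)
    (hs : ∀ μ ∈ spectrum ℂ (B.map Complex.ofReal), ‖μ‖ < 1) (δ : ℝ) (hδ : 0 < δ) :
    ∃ n0 : ℕ, ∀ n ≥ n0, ∀ x : Fin d → ℝ, ‖(B ^ n).mulVec x‖ ≤ δ * ‖x‖ := by
  open scoped Matrix.Norms.L2Operator in
  have hdec : Tendsto (fun n : ℕ => ‖(B.map Complex.ofReal) ^ n‖ * Real.sqrt d) atTop (nhds 0) := by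
    simpa using (aux_decay d hd (B.map Complex.ofReal) hs).mul_const (Real.sqrt d)
  have hev : ∀ᶠ n : ℕ in atTop, ‖(B.map Complex.ofReal) ^ n‖ * Real.sqrt d < δ :=
    hdec.eventually_lt_const hδ
  obtain ⟨n0, hn0⟩ := eventually_atTop.mp hev
  refine ⟨n0, fun n hn x => ?_⟩
  have hmap : (B ^ n).map Complex.ofReal = (B.map Complex.ofReal) ^ n := by
    exact map_pow (Complex.ofRealHom.mapMatrix) B n
  calc ‖(B ^ n).mulVec x‖ ≤ ‖(B ^ n).map Complex.ofReal‖ * (Real.sqrt d * ‖x‖) :=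
        aux_mulVec_norm_le _ x
    _ = (‖(B.map Complex.ofReal) ^ n‖ * Real.sqrt d) * ‖x‖ := by rw [hmap]; ring
    _ ≤ δ * ‖x‖ := mul_le_mul_of_nonneg_right (hn0 n hn).le (norm_nonneg x)

theorem mv_mv {d : ℕ} (A : GL (Fin d) ℝ) (j k : ℤ) (x : Rd d) :
    mv A j (mv A k x) = mv A (j + k) x := by
  unfold mv
  rw [Matrix.mulVec_mulVec, ← Units.val_mul, ← zpow_add]

theorem mv_zero {d : ℕ} (A : GL (Fin d) ℝ) (x : Rd d) : mv A 0 x = x := by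
  simp [mv]

theorem mem_mv_image_iff {d : ℕ} (A : GL (Fin d) ℝ) (j : ℤ) (S : Set (Rd d)) (x : Rd d) :
    x ∈ mv A j '' S ↔ mv A (-j) x ∈ S := by
  constructor
  · rintro ⟨z, hz, rfl⟩
    rwa [mv_mv, neg_add_cancel, mv_zero]
  · intro hx
    exact ⟨mv A (-j) x, hx, by rw [mv_mv, add_neg_cancel, mv_zero]⟩

/-- Proposition: `{h_j = h(A^{-j}·)}` is an RPU associated to `{A^j Q_ε}`:
supports are contained in `A^j Q_ε`, and `c₁ ≤ Σ_j |h_j(x)|² ≤ ρ c₂` off the origin,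
where `ρ` is the finite covering index of `{A^j Q_ε}`. -/
theorem stmt9 {d : ℕ} (A : GL (Fin d) ℝ)
    (hA : Expansive (A : Matrix (Fin d) (Fin d) ℝ))
    (Q : Set (Rd d)) (hQc : IsCompact Q) (h0 : (0 : Rd d) ∉ Q)
    (hcover : (⋃ j : ℤ, mv A j '' Q) = {x : Rd d | x ≠ 0})
    (ε c₁ c₂ : ℝ) (hε : 0 < ε) (hεd : ε < Metric.infDist (0 : Rd d) Q)
    (h : Rd d → ℂ) (hmeas : Measurable h)
    (hc₁ : 0 < c₁)
    (hb : ∀ x, ‖h x‖ ^ 2 ≤ c₂)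
    (hlow : ∀ x ∈ Q, c₁ ≤ ‖h x‖ ^ 2)
    (hsupp : ∀ x : Rd d, x ∉ {z : Rd d | Metric.infDist z Q ≤ ε} → h x = 0) :
    (∀ j : ℤ, Function.support (fun x => h (mv A (-j) x)) ⊆
        mv A j '' {z : Rd d | Metric.infDist z Q ≤ ε}) ∧
    ∃ ρ : ℕ, 1 ≤ ρ ∧
      (∀ x : Rd d, {j : ℤ | x ∈ mv A j '' {z : Rd d | Metric.infDist z Q ≤ ε}}.Finite ∧
        {j : ℤ | x ∈ mv A j '' {z : Rd d | Metric.infDist z Q ≤ ε}}.ncard ≤ ρ) ∧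
      (∀ x : Rd d, x ≠ 0 →
        c₁ ≤ ∑' j : ℤ, ‖h (mv A (-j) x)‖ ^ 2 ∧
          (∑' j : ℤ, ‖h (mv A (-j) x)‖ ^ 2) ≤ (ρ : ℝ) * c₂) := by
  set Qε : Set (Rd d) := {z : Rd d | Metric.infDist z Q ≤ ε} with hQε
  -- Q is nonempty
  have hQne : Q.Nonempty := by
    rcases Q.eq_empty_or_nonempty with rfl | hne
    · rw [Metric.infDist_empty] at hεd; linarith
    · exact hne
  -- dimension is positive
  have hd : 0 < d := by
    by_contra hd0
    push_neg at hd0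
    interval_cases d
    obtain ⟨q, hq⟩ := hQne
    have : q = 0 := funext fun i => absurd i.2 (by omega)
    exact h0 (this ▸ hq)
  -- lower bound for norms on Qε
  set m : ℝ := Metric.infDist (0 : Rd d) Q - ε with hm
  have hm0 : 0 < m := by simp [hm]; linarith
  have hmlow : ∀ z ∈ Qε, m ≤ ‖z‖ := by
    intro z hz
    have h1 : Metric.infDist (0 : Rd d) Q ≤ Metric.infDist z Q + dist (0 : Rd d) z :=
      Metric.infDist_le_infDist_add_dist
    have h2 : dist (0 : Rd d) z = ‖z‖ := by rw [dist_comm, dist_zero_right]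
    have h3 : Metric.infDist z Q ≤ ε := hz
    simp only [hm]; linarith [h1, h2 ▸ h1]
  -- upper bound for norms on Qε
  obtain ⟨R, hR⟩ := isBounded_iff_forall_norm_le.mp hQc.isBounded
  set M : ℝ := R + (ε + 1) with hM
  have hMup : ∀ z ∈ Qε, ‖z‖ ≤ M := by
    intro z hz
    have h3 : Metric.infDist z Q < ε + 1 := lt_of_le_of_lt hz (by linarith)
    obtain ⟨q, hqQ, hqd⟩ := (Metric.infDist_lt_iff hQne).mp h3
    calc ‖z‖ ≤ ‖q‖ + dist z q := by
          rw [dist_eq_norm]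
          have := norm_sub_norm_le z q
          linarith [norm_sub_norm_le z q]
      _ ≤ R + (ε + 1) := add_le_add (hR q hqQ) hqd.le
  -- membership criterion
  have hmem : ∀ (j : ℤ) (x : Rd d), x ∈ mv A j '' Qε ↔ mv A (-j) x ∈ Qε :=
    fun j x => mem_mv_image_iff A j Qε x
  -- contraction
  set B : Matrix (Fin d) (Fin d) ℝ := ((A⁻¹ : GL (Fin d) ℝ) : Matrix (Fin d) (Fin d) ℝ) with hB
  have hδ : 0 < m / 2 / (max M 1) := by positivity
  obtain ⟨n0, hn0⟩ := aux_contract hd B (aux_spec_inv A hA) _ hδ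
  -- key gap bound
  have hgap : ∀ (x : Rd d) (j k : ℤ), j ≤ k → mv A (-j) x ∈ Qε → mv A (-k) x ∈ Qε →
      k - j < n0 + 1 := by
    intro x j k hjk hj hk
    by_contra hge
    push_neg at hge
    set n : ℕ := (k - j).toNat with hn
    have hnn : (n : ℤ) = k - j := Int.toNat_of_nonneg (by omega)
    have hn0le : n0 ≤ n := by omega
    have hkey : mv A (-k) x = (B ^ n).mulVec (mv A (-j) x) := by
      have h1 : mv A (-k) x = mv A (-(k - j)) (mv A (-j) x) := by
        rw [mv_mv]; congr 1; ring
      rw [h1]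
      unfold mv
      congr 1
      rw [← hnn, zpow_neg, ← inv_zpow, zpow_natCast, Units.val_pow_eq_pow_val]
    have hbound := hn0 n hn0le (mv A (-j) x)
    rw [← hkey] at hbound
    have h1 : m ≤ ‖mv A (-k) x‖ := hmlow _ hk
    have h2 : ‖mv A (-j) x‖ ≤ M := hMup _ hj
    have h3 : ‖mv A (-j) x‖ ≤ max M 1 := le_trans h2 (le_max_left _ _)
    have h4 : m / 2 / max M 1 * ‖mv A (-j) x‖ ≤ m / 2 := by
      rw [div_mul_eq_mul_div, div_le_iff₀ (by positivity)]
      calc m / 2 * ‖mv A (-j) x‖ ≤ m / 2 * max M 1 :=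
            mul_le_mul_of_nonneg_left h3 (by positivity)
        _ = m / 2 * max M 1 := rfl
    linarith
  -- covering index
  set ρ : ℕ := 2 * n0 + 3 with hρ
  have hρ1 : 1 ≤ ρ := by omega
  have hScard : ∀ x : Rd d, {j : ℤ | x ∈ mv A j '' Qε}.Finite ∧
      {j : ℤ | x ∈ mv A j '' Qε}.ncard ≤ ρ := by
    intro x
    set S : Set ℤ := {j : ℤ | x ∈ mv A j '' Qε} with hS
    rcases S.eq_empty_or_nonempty with hSe | ⟨j0, hj0⟩
    · rw [hSe]; simp
    · have hj0' : mv A (-j0) x ∈ Qε := (hmem j0 x).mp hj0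
      have hsub : S ⊆ Set.Icc (j0 - (n0 + 1)) (j0 + (n0 + 1)) := by
        intro k hk
        have hk' : mv A (-k) x ∈ Qε := (hmem k x).mp hk
        rcases le_total j0 k with hle | hle
        · have := hgap x j0 k hle hj0' hk'
          simp only [Set.mem_Icc]; omega
        · have := hgap x k j0 hle hk' hj0'
          simp only [Set.mem_Icc]; omega
      have hfin : S.Finite := (Set.finite_Icc _ _).subset hsub
      refine ⟨hfin, ?_⟩
      calc S.ncard ≤ (Set.Icc (j0 - (n0 + 1)) (j0 + (n0 + 1))).ncard :=
            Set.ncard_le_ncard hsub (Set.finite_Icc _ _)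
        _ = (Finset.Icc (j0 - (n0 + 1)) (j0 + (n0 + 1))).card := by
            rw [← Finset.coe_Icc, Set.ncard_coe_finset]
        _ = ρ := by rw [Int.card_Icc]; omega
  -- support
  have hsupport : ∀ j : ℤ, Function.support (fun x => h (mv A (-j) x)) ⊆ mv A j '' Qε := by
    intro j x hx
    simp only [Function.mem_support] at hx
    rw [hmem j x]
    by_contra hc
    exact hx (hsupp _ hc)
  refine ⟨hsupport, ρ, hρ1, hScard, ?_⟩
  intro x hx
  -- the summand
  set f : ℤ → ℝ := fun j => ‖h (mv A (-j) x)‖ ^ 2 with hfdef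
  have hc₂0 : 0 ≤ c₂ := le_trans (by positivity) (hb 0)
  obtain ⟨hSfin, hSc⟩ := hScard x
  have hfzero : ∀ j ∉ hSfin.toFinset, f j = 0 := by
    intro j hj
    simp only [Set.Finite.mem_toFinset, Set.mem_setOf_eq] at hj
    rw [hmem j x] at hj
    simp [hfdef, hsupp _ hj]
  have hsummable : Summable f := summable_of_finite_support <| by
    apply Set.Finite.subset hSfin.toFinset.finite_toSet
    intro j hj
    simp only [Finset.coe_sort_coe, Finset.mem_coe, Set.Finite.mem_toFinset]
    by_contra hc
    exact hj (hfzero j (by simpa using hc))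
  have htsum : ∑' j : ℤ, f j = ∑ j ∈ hSfin.toFinset, f j := tsum_eq_sum hfzero
  constructor
  · -- lower bound
    have hx' : x ∈ ⋃ j : ℤ, mv A j '' Q := by rw [hcover]; exact hx
    obtain ⟨j0, hj0⟩ := Set.mem_iUnion.mp hx'
    have hj0' : mv A (-j0) x ∈ Q := (mem_mv_image_iff A j0 Q x).mp hj0
    have h1 : c₁ ≤ f j0 := hlow _ hj0'
    refine le_trans h1 (Summable.le_tsum hsummable j0 fun j _ => by positivity)
  · -- upper bound
    rw [htsum]
    calc ∑ j ∈ hSfin.toFinset, f j ≤ ∑ _j ∈ hSfin.toFinset, c₂ :=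
          Finset.sum_le_sum fun j _ => hb _
      _ = hSfin.toFinset.card * c₂ := by rw [Finset.sum_const, nsmul_eq_mul]
      _ ≤ (ρ : ℝ) * c₂ := by
          apply mul_le_mul_of_nonneg_right _ hc₂0
          have : hSfin.toFinset.card = {j : ℤ | x ∈ mv A j '' Qε}.ncard := by
            rw [Set.ncard_eq_toFinset_card _ hSfin]
          rw [this]
          exact_mod_cast hSc
end
end

section
/- Let A be an invertible d×d real matrix and V a bounded open subset of ℝ^d such that B(0,ε) ∩ V = ∅ for some ε > 0 and ∪_{j∈ℤ} A^j V = ℝ^d \ {0}. Then there exists a compact set Q ⊆ V such that ∪_{j∈ℤ} A^j Q ⊇ ℝ^d \ {0}. -/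
/-!
The closure of `V` is compact and avoids `0`, so finitely many of the open sets `A ^ j • V` cover
it. Shrink this finite cover to compact pieces `K_j ⊆ A ^ j • V` and pull each piece back:
`Q = ⋃ A ^ (-j) • K_j` is a compact subset of `V` whose translates cover `closure V`, hence also
every translate of `V`.
-/

open MeasureTheory Filter Topology
noncomputable section
open Pointwise

instance {n R : Type*} [Fintype n] [DecidableEq n] [TopologicalSpace R] [Semiring R]
    [IsTopologicalSemiring R] : ContinuousConstSMul (Matrix n n R) (n → R) :=
  ⟨fun _ => continuous_const.matrix_mulVec continuous_id⟩

section ZPowCover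

variable {G X : Type*} [Group G] [MulAction G X]

theorem iUnion_zpow_smul_subset_of_subset {g : G} {V Q : Set X}
    (h : V ⊆ ⋃ j : ℤ, (g ^ j) • Q) : ⋃ j : ℤ, (g ^ j) • V ⊆ ⋃ j : ℤ, (g ^ j) • Q := by
  simp only [Set.iUnion_subset_iff, Set.smul_set_subset_iff]
  intro k v hv
  obtain ⟨j, q, hq, rfl⟩ := Set.mem_iUnion.mp (h hv)
  exact Set.mem_iUnion.mpr ⟨k + j, q, hq, by simp only [zpow_add, mul_smul]⟩

variable [TopologicalSpace X] [T2Space X] [ContinuousConstSMul G X]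

theorem exists_isCompact_subset_closure_subset_iUnion_zpow_smul {g : G} {V : Set X}
    (hVo : IsOpen V) (hVc : IsCompact (closure V))
    (hcov : closure V ⊆ ⋃ j : ℤ, (g ^ j) • V) :
    ∃ Q : Set X, IsCompact Q ∧ Q ⊆ V ∧ closure V ⊆ ⋃ j : ℤ, (g ^ j) • Q := by
  obtain ⟨t, ht⟩ := hVc.elim_finite_subcover _ (fun j => hVo.smul (g ^ j)) hcov
  obtain ⟨K, hKc, hKV, hK⟩ :=
    hVc.finite_compact_cover t _ (fun j _ => hVo.smul (g ^ j)) ht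
  refine ⟨⋃ j ∈ t, (g ^ j)⁻¹ • K j, t.isCompact_biUnion fun j _ => (hKc j).smul _, ?_, ?_⟩
  · simp only [Set.iUnion_subset_iff, Set.smul_set_subset_iff]
    intro j _ x hx
    obtain ⟨v, hv, rfl⟩ := hKV j hx
    simpa using hv
  · rw [hK]
    simp only [Set.iUnion_subset_iff]
    intro j hj x hx
    exact Set.mem_iUnion.mpr
      ⟨j, _, Set.mem_biUnion hj (Set.smul_mem_smul_set hx), smul_inv_smul _ x⟩

theorem exists_isCompact_subset_iUnion_zpow_smul {g : G} {V : Set X}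
    (hVo : IsOpen V) (hVc : IsCompact (closure V))
    (hcov : closure V ⊆ ⋃ j : ℤ, (g ^ j) • V) :
    ∃ Q : Set X, IsCompact Q ∧ Q ⊆ V ∧ ⋃ j : ℤ, (g ^ j) • V ⊆ ⋃ j : ℤ, (g ^ j) • Q := by
  obtain ⟨Q, hQc, hQV, hVQ⟩ :=
    exists_isCompact_subset_closure_subset_iUnion_zpow_smul hVo hVc hcov
  exact ⟨Q, hQc, hQV, iUnion_zpow_smul_subset_of_subset (subset_closure.trans hVQ)⟩

end ZPowCover

/-- Lemma: if `V` is bounded open, avoids a ball around `0`, and `∪_j A^j V = ℝ^d \ {0}`,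
then some compact `Q ⊆ V` also covers `ℝ^d \ {0}` by the dilations `A^j`. -/
theorem stmt10 {d : ℕ} (A : GL (Fin d) ℝ)
    (V : Set (Rd d)) (hVo : IsOpen V) (hVb : Bornology.IsBounded V)
    (ε : ℝ) (hε : 0 < ε) (hdisj : Metric.ball (0 : Rd d) ε ∩ V = ∅)
    (hcover : (⋃ j : ℤ, mv A j '' V) = {x : Rd d | x ≠ 0}) :
    ∃ Q : Set (Rd d), IsCompact Q ∧ Q ⊆ V ∧
      {x : Rd d | x ≠ 0} ⊆ ⋃ j : ℤ, mv A j '' Q := by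
  have hclosure : closure V ⊆ (Metric.ball (0 : Rd d) ε)ᶜ :=
    closure_minimal
      (Set.subset_compl_iff_disjoint_left.mpr (Set.disjoint_iff_inter_eq_empty.mpr hdisj))
      Metric.isOpen_ball.isClosed_compl
  have hclosure_ne_zero : closure V ⊆ {x : Rd d | x ≠ 0} :=
    fun x hx hx0 => hclosure hx (hx0 ▸ Metric.mem_ball_self hε)
  -- `mv A j '' S` is definitionally `A ^ j • S`, for the action of `GL` on vectors by `mulVec`.
  obtain ⟨Q, hQc, hQV, hVQ⟩ := exists_isCompact_subset_iUnion_zpow_smul (g := A) hVo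
    hVb.isCompact_closure (hcover ▸ hclosure_ne_zero)
  exact ⟨Q, hQc, hQV, hcover ▸ hVQ⟩
end
end
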